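/- Let f : ℝ³ → [0,∞) be measurable and suppose there are constants C₀ > 0 and δ > 0 with f(y) ≤ C₀ e^{−δ|y|} for all y. Then lim_{|x|→∞} |x| ∫_{ℝ³} f(y)/|x − y| dy = ∫_{ℝ³} f(y) dy. -/

import Mathlib

/-!
Since `|‖x‖ - ‖x - y‖| ≤ ‖y‖`, the error `‖x‖ ∫ f(y)/‖x - y‖ dy - ∫ f` is bounded by the
potential `∫ h(y)/‖x - y‖ dy` of `h(y) = |f(y)| ‖y‖`, which the exponential decay makes
integrable, bounded and vanishing at infinity. Such a potential tends to `0`: where `‖y‖ < R` and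
`2R ≤ ‖x‖` the kernel is at most `2/‖x‖`; where `‖y‖ ≥ R` we have `h ≤ η`, and splitting
`1/‖x - y‖` into its part on the unit ball around `x` (integrable in dimension at least two) and a
part bounded by `1` leaves `η ∫_{B(0,1)} 1/‖z‖` plus the tail `∫_{‖y‖ ≥ R} h`.
-/

noncomputable section

open MeasureTheory Real Filter

/-- ℝ³ as a Euclidean space. -/
abbrev R3 : Type := EuclideanSpace ℝ (Fin 3)

/-- The point (a, b, c) ∈ ℝ³. -/
def pt (a b c : ℝ) : R3 := (WithLp.equiv 2 (Fin 3 → ℝ)).symm ![a, b, c]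

/-- The Laplacian of `f : ℝ³ → ℝ`, as the sum of the second partial derivatives. -/
def lap (f : R3 → ℝ) (x : R3) : ℝ :=
  ∑ i : Fin 3, fderiv ℝ (fun y => fderiv ℝ f y (EuclideanSpace.single i 1)) x
    (EuclideanSpace.single i 1)

/-- The Schrödinger–Newton ground state: a pair (U, Ψ) of positive, radially
symmetric C² functions solving ΔU − U + ΨU = 0, ΔΨ + (1/2)U² = 0 on ℝ³,
tending to 0 at infinity, with U(0) = max U, U strictly decreasing in |x| and
|x|e^{|x|}U(x) → λ₀ > 0 as |x| → ∞. -/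
structure GroundState (U Ψ : R3 → ℝ) : Prop where
  smoothU : ContDiff ℝ 2 U
  smoothΨ : ContDiff ℝ 2 Ψ
  posU : ∀ x, 0 < U x
  posΨ : ∀ x, 0 < Ψ x
  radU : ∀ x y : R3, ‖x‖ = ‖y‖ → U x = U y
  radΨ : ∀ x y : R3, ‖x‖ = ‖y‖ → Ψ x = Ψ y
  maxU : ∀ x, U x ≤ U 0
  eqU : ∀ x, lap U x - U x + Ψ x * U x = 0
  eqΨ : ∀ x, lap Ψ x + (1/2) * (U x)^2 = 0
  limU : ∀ ε > 0, ∃ R : ℝ, ∀ x : R3, R ≤ ‖x‖ → |U x| ≤ ε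
  limΨ : ∀ ε > 0, ∃ R : ℝ, ∀ x : R3, R ≤ ‖x‖ → |Ψ x| ≤ ε
  decU : ∀ x y : R3, ‖x‖ < ‖y‖ → U y < U x
  decayU : ∃ lam₀ > (0:ℝ), ∀ ε > 0, ∃ R : ℝ, ∀ x : R3, R ≤ ‖x‖ →
    |‖x‖ * Real.exp ‖x‖ * U x - lam₀| ≤ ε

/-- Condition (H) on the radial potential V, with constants V₀, a, θ, m. -/
def CondH (V : ℝ → ℝ) (V₀ a θ m : ℝ) : Prop :=
  ContinuousOn V (Set.Ioi 0) ∧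
  (∃ Cb : ℝ, ∀ ρ ∈ Set.Ioi (0:ℝ), |V ρ| ≤ Cb) ∧
  0 < V₀ ∧ 0 < a ∧ 0 < θ ∧ 1/2 ≤ m ∧ m < 1 ∧
  (∀ ρ ∈ Set.Ioi (0:ℝ), V₀ ≤ V ρ) ∧
  ∃ C_V > (0:ℝ), ∃ R₀ > (0:ℝ), ∀ ρ : ℝ, R₀ ≤ ρ →
    |V ρ - V₀ - a * ρ ^ (-m)| ≤ C_V * ρ ^ (-(m + θ))

/-- The spike locations ξ_i = (r cos(2iπ/s), r sin(2iπ/s), 0), i = 0, …, s−1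
(indexed from 0, so that here `xiP s r 0` is ξ₁ of the paper and the spike
`xiP s r (i-1)` is ξ_i of the paper). -/
def xiP (s : ℕ) (r : ℝ) (i : ℕ) : R3 :=
  pt (r * Real.cos (2 * π * i / s)) (r * Real.sin (2 * π * i / s)) 0

/-- Rotation by angle θ about the x₃-axis. -/
def rotZ (θ : ℝ) (x : R3) : R3 :=
  pt (Real.cos θ * x 0 - Real.sin θ * x 1) (Real.sin θ * x 0 + Real.cos θ * x 1) (x 2)

/-- The sum of bumps U_r = Σ_{i} U(· − ξ_i). -/
def Ur (U : R3 → ℝ) (s : ℕ) (r : ℝ) (x : R3) : ℝ :=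
  ∑ i ∈ Finset.range s, U (x - xiP s r i)

/-- Z_i(x) = −∇U(x−ξ_i)·(cos θ_i, sin θ_i, 0) = ∂/∂r of U(· − ξ_i). -/
def Zfun (U : R3 → ℝ) (s : ℕ) (r : ℝ) (i : ℕ) (x : R3) : ℝ :=
  -(inner ℝ (gradient U (x - xiP s r i))
      (pt (Real.cos (2 * π * i / s)) (Real.sin (2 * π * i / s)) 0) : ℝ)

/-- Membership in the symmetry class 𝓔_s with the orthogonality conditions. -/
def memEs (U : R3 → ℝ) (s : ℕ) (r : ℝ) (w : R3 → ℝ) : Prop :=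
  (∀ x : R3, w (pt (x 0) (-(x 1)) (x 2)) = w x) ∧
  (∀ x : R3, w (pt (x 0) (x 1) (-(x 2))) = w x) ∧
  (∀ x : R3, w (rotZ (2 * π / s) x) = w x) ∧
  (∀ i ∈ Finset.range s,
    ∫ x : R3, (∫ y : R3,
      ((U (y - xiP s r i))^2 * Zfun U s r i x
        + 2 * U (y - xiP s r i) * Zfun U s r i y * U (x - xiP s r i)) * w x / ‖x - y‖) = 0)

open Metric Set Topology

theorem tendsto_setIntegral_le_norm_atTop {E F : Type*} [NormedAddCommGroup E]
    [MeasurableSpace E] [OpensMeasurableSpace E] [NormedAddCommGroup F] [NormedSpace ℝ F]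
    {μ : Measure E} {h : E → F} (hh : Integrable h μ) :
    Tendsto (fun R : ℝ => ∫ y in {y | R ≤ ‖y‖}, h y ∂μ) atTop (𝓝 0) := by
  have hempty : (⋂ R : ℝ, {y : E | R ≤ ‖y‖}) = ∅ :=
    eq_empty_of_forall_notMem fun y hy => by
      have : ‖y‖ + 1 ≤ ‖y‖ := mem_iInter.1 hy (‖y‖ + 1)
      linarith
  simpa [hempty] using tendsto_setIntegral_of_antitone (μ := μ)
    (fun R => measurableSet_le measurable_const measurable_norm)
    (fun R R' hRR' y (hy : R' ≤ ‖y‖) => hRR'.trans hy) ⟨0, hh.integrableOn⟩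

theorem abs_norm_mul_integral_div_norm_sub_sub_integral_le {E : Type*} [NormedAddCommGroup E]
    [MeasurableSpace E] {μ : Measure E} [NullSingletonClass μ] {g : E → ℝ} (x : E)
    (hg : Integrable g μ) (hgx : Integrable (fun y => g y / ‖x - y‖) μ)
    (hgx' : Integrable (fun y => |g y| * ‖y‖ / ‖x - y‖) μ) :
    |‖x‖ * ∫ y, g y / ‖x - y‖ ∂μ - ∫ y, g y ∂μ| ≤ ∫ y, |g y| * ‖y‖ / ‖x - y‖ ∂μ := by
  rw [← integral_const_mul, ← integral_sub (hgx.const_mul _) hg]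
  refine abs_integral_le_integral_abs.trans
    (integral_mono_ae ((hgx.const_mul _).sub hg).abs hgx' ?_)
  filter_upwards [μ.ae_ne x] with y hyx
  have hxy : 0 < ‖x - y‖ := norm_pos_iff.2 (sub_ne_zero.2 hyx.symm)
  have hrev : |‖x‖ - ‖x - y‖| ≤ ‖y‖ := by
    simpa using abs_norm_sub_norm_le x (x - y)
  calc |‖x‖ * (g y / ‖x - y‖) - g y| = |g y| * |‖x‖ - ‖x - y‖| / ‖x - y‖ := by
        rw [← abs_mul, ← abs_of_pos hxy, ← abs_div, abs_of_pos hxy]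
        congr 1
        field_simp
    _ ≤ |g y| * ‖y‖ / ‖x - y‖ := by gcongr

theorem div_norm_le_mul_indicator_inv_norm_add {E : Type*} [NormedAddCommGroup E]
    {a M : ℝ} (z : E) (ha : 0 ≤ a) (haM : a ≤ M) :
    a / ‖z‖ ≤ M * (ball 0 1).indicator (fun z => ‖z‖⁻¹) z + a := by
  by_cases hz : z ∈ ball (0 : E) 1
  · rw [indicator_of_mem hz, div_eq_mul_inv]
    nlinarith [inv_nonneg.2 (norm_nonneg z)]
  · rw [indicator_of_notMem hz, mul_zero, zero_add]
    exact div_le_self ha (by simpa using hz)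

theorem mul_exp_neg_mul_le_inv {b : ℝ} (hb : 0 < b) (t : ℝ) : t * exp (-b * t) ≤ b⁻¹ := by
  have h := (mul_exp_neg_le_exp_neg_one (b * t)).trans (exp_le_one_iff.2 (by norm_num))
  calc t * exp (-b * t) = b⁻¹ * (b * t * exp (-(b * t))) := by
        rw [neg_mul]
        field_simp
    _ ≤ b⁻¹ := mul_le_of_le_one_right (inv_nonneg.2 hb.le) h

section AddHaar

variable {E : Type*} [NormedAddCommGroup E] [NormedSpace ℝ E] [FiniteDimensional ℝ E]
  [MeasurableSpace E] [BorelSpace E] {μ : Measure E} [μ.IsAddHaarMeasure]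

theorem integrable_rpow_norm_mul_exp_neg_mul_norm [Nontrivial E] {s b : ℝ}
    (hs : -(Module.finrank ℝ E : ℝ) < s) (hb : 0 < b) :
    Integrable (fun y : E => ‖y‖ ^ s * exp (-b * ‖y‖)) μ := by
  have hn : 1 ≤ Module.finrank ℝ E := Module.finrank_pos
  refine (integrable_fun_norm_addHaar μ (f := fun t => t ^ s * exp (-b * t))).2 ?_
  refine (integrableOn_rpow_mul_exp_neg_mul_rpow (s := (Module.finrank ℝ E - 1 : ℕ) + s)
    (p := 1) ?_ one_pos hb).congr_fun (fun t (ht : 0 < t) => ?_) measurableSet_Ioi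
  · push_cast [Nat.cast_sub hn]
    linarith
  · dsimp only
    rw [rpow_add ht, rpow_natCast, rpow_one, smul_eq_mul, mul_assoc]

theorem integrableOn_inv_norm_ball (hE : 2 ≤ Module.finrank ℝ E) (r : ℝ) :
    IntegrableOn (fun z : E => ‖z‖⁻¹) (ball 0 r) μ := by
  have : Nontrivial E := Module.nontrivial_of_finrank_pos (R := ℝ) (by omega)
  refine (integrableOn_fun_norm_addHaar μ (f := fun t : ℝ => t⁻¹)).2 ?_
  refine ((continuous_pow (Module.finrank ℝ E - 2)).integrableOn_Icc (a := 0) (b := r)).mono_set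
    Ioo_subset_Icc_self |>.congr_fun (fun t (ht : t ∈ Ioo 0 r) => ?_) measurableSet_Ioo
  rw [smul_eq_mul, show Module.finrank ℝ E - 1 = Module.finrank ℝ E - 2 + 1 by omega, pow_succ,
    mul_assoc, mul_inv_cancel₀ ht.1.ne', mul_one]

theorem integrable_indicator_inv_norm_sub (hE : 2 ≤ Module.finrank ℝ E) (x : E) :
    Integrable (fun y => (ball 0 1).indicator (fun z : E => ‖z‖⁻¹) (x - y)) μ :=
  ((integrableOn_inv_norm_ball hE 1).integrable_indicator measurableSet_ball).comp_sub_left x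

theorem MeasureTheory.Integrable.div_norm_sub (hE : 2 ≤ Module.finrank ℝ E) {g : E → ℝ}
    {M : ℝ} (hg : Integrable g μ) (hM : ∀ y, |g y| ≤ M) (x : E) :
    Integrable (fun y => g y / ‖x - y‖) μ := by
  refine (((integrable_indicator_inv_norm_sub hE x).const_mul M).add hg.abs).mono'
    (hg.aestronglyMeasurable.mul (by fun_prop : Measurable fun y => ‖x - y‖⁻¹).aestronglyMeasurable)
    (.of_forall fun y => ?_)
  rw [norm_div, norm_norm, Real.norm_eq_abs, Pi.add_apply]
  exact div_norm_le_mul_indicator_inv_norm_add _ (abs_nonneg _) (hM y)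

theorem integral_div_norm_sub_le (hE : 2 ≤ Module.finrank ℝ E) {h : E → ℝ} {R η : ℝ} {x : E}
    (hh0 : 0 ≤ h) (hh : Integrable h μ) (hη0 : 0 ≤ η) (hη : ∀ y, R ≤ ‖y‖ → h y ≤ η)
    (hx : 2 * R ≤ ‖x‖) :
    ∫ y, h y / ‖x - y‖ ∂μ ≤ 2 / ‖x‖ * ∫ y, h y ∂μ + η * ∫ z in ball 0 1, ‖z‖⁻¹ ∂μ
      + ∫ y in {y | R ≤ ‖y‖}, h y ∂μ := by
  have hS : MeasurableSet {y : E | R ≤ ‖y‖} := measurableSet_le measurable_const measurable_norm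
  have hk := integrable_indicator_inv_norm_sub (μ := μ) hE x
  have hhk : Integrable (fun y => 2 / ‖x‖ * h y
      + η * (ball 0 1).indicator (fun z : E => ‖z‖⁻¹) (x - y)) μ :=
    (hh.const_mul _).add (hk.const_mul _)
  have hk0 : ∀ y, 0 ≤ (ball 0 1).indicator (fun z : E => ‖z‖⁻¹) (x - y) :=
    fun y => indicator_nonneg (fun _ _ => inv_nonneg.2 (norm_nonneg _)) _
  calc ∫ y, h y / ‖x - y‖ ∂μ
      ≤ ∫ y, (2 / ‖x‖ * h y + η * (ball 0 1).indicator (fun z => ‖z‖⁻¹) (x - y)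
          + {y | R ≤ ‖y‖}.indicator h y) ∂μ := by
        refine integral_mono_of_nonneg (.of_forall fun y => div_nonneg (hh0 y) (norm_nonneg _))
          (hhk.add (hh.indicator hS)) (.of_forall fun y => ?_)
        have hfar : 0 ≤ 2 / ‖x‖ * h y := mul_nonneg (by positivity) (hh0 y)
        dsimp only
        by_cases hy : R ≤ ‖y‖
        · rw [indicator_of_mem (show y ∈ {y | R ≤ ‖y‖} from hy)]
          linarith [div_norm_le_mul_indicator_inv_norm_add (x - y) (hh0 y) (hη y hy)]
        · rw [indicator_of_notMem (show y ∉ {y | R ≤ ‖y‖} from hy)]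
          have hx0 : 0 < ‖x‖ := by linarith [norm_nonneg y, not_le.1 hy]
          have hnear : ‖x‖ / 2 ≤ ‖x - y‖ := by linarith [norm_sub_norm_le x y, not_le.1 hy]
          have hxy : h y / ‖x - y‖ ≤ 2 / ‖x‖ * h y := by
            calc h y / ‖x - y‖ ≤ h y / (‖x‖ / 2) := by
                  gcongr
                  exact hh0 y
              _ = 2 / ‖x‖ * h y := by ring
          nlinarith [hk0 y]
    _ = _ := by
        rw [integral_add hhk (hh.indicator hS),
          integral_add (hh.const_mul _) (hk.const_mul _), integral_const_mul, integral_const_mul,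
          integral_sub_left_eq_self (fun z => (ball 0 1).indicator (fun z : E => ‖z‖⁻¹) z) μ x,
          integral_indicator measurableSet_ball, integral_indicator hS]

theorem tendsto_integral_div_norm_sub_cobounded (hE : 2 ≤ Module.finrank ℝ E) {h : E → ℝ}
    (hh0 : 0 ≤ h) (hh : Integrable h μ) (hlim : Tendsto h (Bornology.cobounded E) (𝓝 0)) :
    Tendsto (fun x => ∫ y, h y / ‖x - y‖ ∂μ) (Bornology.cobounded E) (𝓝 0) := by
  set c := ∫ z in ball (0 : E) 1, ‖z‖⁻¹ ∂μ
  have hc : 0 ≤ c := setIntegral_nonneg measurableSet_ball fun z _ => inv_nonneg.2 (norm_nonneg z)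
  refine tendsto_order.2 ⟨fun a ha => .of_forall fun x =>
    ha.trans_le (integral_nonneg fun y => div_nonneg (hh0 y) (norm_nonneg _)), fun ε hε => ?_⟩
  set η := ε / (3 * (c + 1))
  have hη : 0 < η := by positivity
  have hηc : η * c < ε / 3 := by
    rw [div_mul_eq_mul_div, div_lt_iff₀ (by positivity)]
    nlinarith
  obtain ⟨R₁, -, hR₁⟩ :=
    (hasBasis_cobounded_norm (E := E)).eventually_iff.1 (hlim.eventually (ge_mem_nhds hη))
  obtain ⟨R₂, hR₂⟩ := eventually_atTop.1
    ((tendsto_setIntegral_le_norm_atTop hh).eventually (gt_mem_nhds (by positivity : 0 < ε / 3)))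
  have hnear : ∀ᶠ x in Bornology.cobounded E, 2 / ‖x‖ * ∫ y, h y ∂μ < ε / 3 := by
    have := (tendsto_const_nhds (x := (2 : ℝ))).div_atTop (tendsto_norm_cobounded_atTop (E := E))
    simpa using (this.mul_const (∫ y, h y ∂μ)).eventually
      (gt_mem_nhds (by rw [zero_mul]; positivity))
  filter_upwards [hnear, eventually_cobounded_le_norm (2 * max R₁ R₂)] with x hx₁ hx₂
  calc ∫ y, h y / ‖x - y‖ ∂μ
      ≤ 2 / ‖x‖ * ∫ y, h y ∂μ + η * c + ∫ y in {y | max R₁ R₂ ≤ ‖y‖}, h y ∂μ :=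
        integral_div_norm_sub_le hE hh0 hh hη.le
          (fun y hy => hR₁ (le_of_max_le_left hy)) hx₂
    _ < ε / 3 + ε / 3 + ε / 3 := by
        gcongr
        exact hR₂ _ (le_max_right _ _)
    _ = ε := by ring

theorem tendsto_norm_mul_integral_div_norm_sub_of_abs_le_exp (hE : 2 ≤ Module.finrank ℝ E)
    {g : E → ℝ} {C δ : ℝ} (hg : AEStronglyMeasurable g μ) (hC : 0 ≤ C) (hδ : 0 < δ)
    (hdecay : ∀ y, |g y| ≤ C * exp (-δ * ‖y‖)) :
    Tendsto (fun x => ‖x‖ * ∫ y, g y / ‖x - y‖ ∂μ) (Bornology.cobounded E)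
      (𝓝 (∫ y, g y ∂μ)) := by
  have : Nontrivial E := Module.nontrivial_of_finrank_pos (R := ℝ) (by omega)
  have hdim : -(Module.finrank ℝ E : ℝ) < 0 := by
    linarith [(show (2 : ℝ) ≤ Module.finrank ℝ E by exact_mod_cast hE)]
  have hexp0 : Integrable (fun y : E => exp (-δ * ‖y‖)) μ := by
    simpa using integrable_rpow_norm_mul_exp_neg_mul_norm (μ := μ) hdim hδ
  have hexp1 : Integrable (fun y : E => ‖y‖ * exp (-δ * ‖y‖)) μ := by
    simpa using integrable_rpow_norm_mul_exp_neg_mul_norm (μ := μ) (hdim.trans one_pos) hδ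
  have hg_bdd (y : E) : |g y| ≤ C := by
    refine (hdecay y).trans (mul_le_of_le_one_right hC (exp_le_one_iff.2 ?_))
    nlinarith [norm_nonneg y]
  have hh_abs (y : E) : |g y| * ‖y‖ ≤ C * (‖y‖ * exp (-δ * ‖y‖)) := by
    rw [mul_comm, mul_left_comm]
    exact mul_le_mul_of_nonneg_left (hdecay y) (norm_nonneg y)
  have hh_bdd (y : E) : |(|g y| * ‖y‖)| ≤ C * δ⁻¹ := by
    rw [abs_of_nonneg (by positivity)]
    exact (hh_abs y).trans (mul_le_mul_of_nonneg_left (mul_exp_neg_mul_le_inv hδ ‖y‖) hC)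
  have hg_int : Integrable g μ := (hexp0.const_mul C).mono' hg (.of_forall hdecay)
  have hh_int : Integrable (fun y => |g y| * ‖y‖) μ :=
    (hexp1.const_mul C).mono' (hg.norm.mul measurable_norm.aestronglyMeasurable)
      (.of_forall fun y => by simpa [abs_mul] using hh_abs y)
  have hh_lim : Tendsto (fun y => |g y| * ‖y‖) (Bornology.cobounded E) (𝓝 0) := by
    refine squeeze_zero (fun y => by positivity) hh_abs ?_
    simpa using ((tendsto_rpow_mul_exp_neg_mul_atTop_nhds_zero 1 δ hδ).comp
      tendsto_norm_cobounded_atTop).const_mul C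
  refine tendsto_sub_nhds_zero_iff.1 (squeeze_zero_norm (fun x => ?_)
    (tendsto_integral_div_norm_sub_cobounded hE (fun y => by positivity) hh_int hh_lim))
  exact abs_norm_mul_integral_div_norm_sub_sub_integral_le x hg_int
    (hg_int.div_norm_sub hE hg_bdd x) (hh_int.div_norm_sub hE hh_bdd x)

end AddHaar

/-- lim_{|x|→∞} |x| ∫ f(y)/|x−y| dy = ∫ f. -/
theorem newtonian_potential_asymptotics
    (f : R3 → ℝ) (hmeas : Measurable f) (hnonneg : ∀ x, 0 ≤ f x)
    (C₀ δ : ℝ) (hC₀ : 0 < C₀) (hδ : 0 < δ)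
    (hdecay : ∀ y : R3, f y ≤ C₀ * Real.exp (-δ * ‖y‖)) :
    ∀ ε > (0:ℝ), ∃ R > (0:ℝ), ∀ x : R3, R ≤ ‖x‖ →
      |‖x‖ * (∫ y : R3, f y / ‖x - y‖) - ∫ y : R3, f y| ≤ ε := by
  intro ε hε
  have hdim : 2 ≤ Module.finrank ℝ R3 := by simp
  have hlim := tendsto_norm_mul_integral_div_norm_sub_of_abs_le_exp (μ := volume) hdim
    hmeas.aestronglyMeasurable hC₀.le hδ fun y => (abs_of_nonneg (hnonneg y)).trans_le (hdecay y)
  obtain ⟨R, -, hR⟩ := (hasBasis_cobounded_norm (E := R3)).eventually_iff.1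
    (hlim.eventually (closedBall_mem_nhds _ hε))
  refine ⟨max R 1, one_pos.trans_le (le_max_right _ _), fun x hx => ?_⟩
  simpa [Real.dist_eq] using hR (le_of_max_le_left hx)
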